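/- arXiv:2308.00312 — 4 statements merged into one kernel-verified Lean document; each statement's English description precedes it below -/
import Mathlib

section
/- Let (Ω, μ) and (Δ, ν) be measure spaces, let 1 < p < ∞ with conjugate index q (1/p + 1/q = 1), and let X be a Banach space over 𝕂 (ℝ or ℂ). Let ({f_α}_{α∈Ω}, {τ_α}_{α∈Ω}) and ({g_β}_{β∈Δ}, {ω_β}_{β∈Δ}) be continuous p-Schauder frames for X. Then for every x ∈ X with x ≠ 0, ν(supp(θ_g x))^{1/p} · μ(supp(θ_f x))^{1/q} ≥ 1 / sup_{α∈Ω, β∈Δ} |g_β(τ_α)|. -/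
/-!
Reconstructing `g_β(x)` from the frame `(f, τ)` and applying Hölder's inequality to
`∫ f_α(x) g_β(τ_α) dμ` gives `|g_β(x)| ≤ ‖x‖ · M · μ(supp θ_f x)^{1/q}` for every `β`, with
`M = sup |g_β(τ_α)|`. As `θ_g x` is carried by its support, its `L^p` norm `‖x‖` is then at
most `‖x‖ · M · μ(supp θ_f x)^{1/q} · ν(supp θ_g x)^{1/p}`; cancel `‖x‖ ≠ 0`.
-/

open MeasureTheory ENNReal Function Set

lemma ENNReal.rpow_mul_rpow_one_div {p : ℝ} (hp : 0 < p) (a b : ℝ≥0∞) :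
    (a ^ p * b) ^ (1 / p) = a * b ^ (1 / p) := by
  rw [mul_rpow_of_nonneg _ _ (by positivity), ← rpow_mul, mul_one_div_cancel hp.ne', rpow_one]

section

variable {α : Type*} [MeasurableSpace α] {μ : Measure α} {p q : ℝ}

lemma lintegral_indicator_const_rpow {s : Set α} (hs : MeasurableSet s) (hp : 0 < p)
    (c : ℝ≥0∞) : ∫⁻ a, s.indicator (fun _ => c) a ^ p ∂μ = c ^ p * μ s := by
  rw [← lintegral_indicator_const hs, comp_indicator_const c (· ^ p) (zero_rpow_of_pos hp)]

theorem enorm_integral_mul_le_eLpNorm'_mul {𝕜 : Type*} [NormedField 𝕜] [NormedSpace ℝ 𝕜]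
    (hpq : p.HolderConjugate q) {u v : α → 𝕜} (hu : AEStronglyMeasurable u μ) {C : ℝ≥0∞}
    (hv : ∀ a, ‖v a‖ₑ ≤ C) :
    ‖∫ a, u a * v a ∂μ‖ₑ ≤ eLpNorm' u p μ * (C * μ (support u) ^ (1 / q)) := by
  -- Hölder needs a measurable second factor; the measurable hull has the same measure.
  set S := toMeasurable μ (support u)
  have hS : MeasurableSet S := measurableSet_toMeasurable μ _
  have hv_le : ∀ a, ‖u a‖ₑ * ‖v a‖ₑ ≤ ((fun a => ‖u a‖ₑ) * S.indicator fun _ => C) a := by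
    intro a
    by_cases ha : u a = 0
    · simp [ha]
    · rw [Pi.mul_apply, indicator_of_mem (subset_toMeasurable μ _ ha)]
      gcongr
      exact hv a
  calc ‖∫ a, u a * v a ∂μ‖ₑ ≤ ∫⁻ a, ‖u a * v a‖ₑ ∂μ := enorm_integral_le_lintegral_enorm _
    _ = ∫⁻ a, ‖u a‖ₑ * ‖v a‖ₑ ∂μ := by simp_rw [enorm_mul]
    _ ≤ ∫⁻ a, ((fun a => ‖u a‖ₑ) * S.indicator fun _ => C) a ∂μ := lintegral_mono hv_le
    _ ≤ eLpNorm' u p μ * (∫⁻ a, S.indicator (fun _ => C) a ^ q ∂μ) ^ (1 / q) :=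
      ENNReal.lintegral_mul_le_Lp_mul_Lq μ hpq hu.enorm (aemeasurable_const.indicator hS)
    _ = eLpNorm' u p μ * (C * μ (support u) ^ (1 / q)) := by
      rw [lintegral_indicator_const_rpow hS hpq.symm.pos, measure_toMeasurable,
        ENNReal.rpow_mul_rpow_one_div hpq.symm.pos]

theorem eLpNorm'_le_mul_measure_support_rpow {E : Type*} [NormedAddCommGroup E] {u : α → E}
    (hp : 0 < p) {C : ℝ≥0∞} (hu : ∀ a, ‖u a‖ₑ ≤ C) :
    eLpNorm' u p μ ≤ C * μ (support u) ^ (1 / p) := by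
  have hu_le : ∀ a, ‖u a‖ₑ ^ p ≤ (support u).indicator (fun _ => C ^ p) a := by
    intro a
    by_cases ha : u a = 0
    · simp [ha, zero_rpow_of_pos hp]
    · rw [indicator_of_mem ha]
      gcongr
      exact hu a
  calc eLpNorm' u p μ ≤ (C ^ p * μ (support u)) ^ (1 / p) := by
        rw [eLpNorm']
        gcongr
        exact (lintegral_mono hu_le).trans (lintegral_indicator_const_le _ _)
    _ = C * μ (support u) ^ (1 / p) := ENNReal.rpow_mul_rpow_one_div hp _ _

theorem eLpNorm'_eq_enorm_of_norm_rpow_eq_integral {E F : Type*} [NormedAddCommGroup E]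
    [NormedAddCommGroup F] {u : α → F} {x : E} (hx : x ≠ 0) (hp : 0 < p)
    (h : ‖x‖ ^ p = ∫ a, ‖u a‖ ^ p ∂μ) : eLpNorm' u p μ = ‖x‖ₑ := by
  have hint : Integrable (fun a => ‖u a‖ ^ p) μ :=
    Integrable.of_integral_ne_zero (h ▸ (Real.rpow_pos_of_pos (norm_pos_iff.2 hx) p).ne')
  have hlint : ∫⁻ a, ‖u a‖ₑ ^ p ∂μ = ‖x‖ₑ ^ p := by
    rw [← ofReal_norm, ofReal_rpow_of_nonneg (norm_nonneg _) hp.le, h,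
      ofReal_integral_eq_lintegral_ofReal hint (ae_of_all _ fun a => by positivity)]
    refine lintegral_congr fun a => ?_
    rw [← ofReal_rpow_of_nonneg (norm_nonneg _) hp.le, ofReal_norm]
  rw [eLpNorm', hlint, one_div, rpow_rpow_inv hp.ne']

end

theorem functional_continuous_uncertainty_second_general
    {𝕂 : Type*} [RCLike 𝕂]
    {X : Type*} [NormedAddCommGroup X] [NormedSpace 𝕂 X]
    {Ω Δ : Type*} [MeasurableSpace Ω] [MeasurableSpace Δ]
    (μ : Measure Ω) (ν : Measure Δ)
    (p q : ℝ) (hp : 1 < p) (hpq : 1 / p + 1 / q = 1)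
    (f : Ω → X →L[𝕂] 𝕂) (τ : Ω → X)
    (g : Δ → X →L[𝕂] 𝕂)
    -- `(f, τ)` is a continuous p-Schauder frame for `X` :
    (hf_meas : ∀ x : X, StronglyMeasurable fun α : Ω => f α x)
    (hf_norm : ∀ x : X, ‖x‖ ^ p = ∫ α, ‖f α x‖ ^ p ∂μ)
    (hf_rec : ∀ x : X, ∀ φ : X →L[𝕂] 𝕂, φ x = ∫ α, f α x * φ (τ α) ∂μ)
    -- `(g, ω)` is a continuous p-Schauder frame for `X` :
    (hg_norm : ∀ x : X, ‖x‖ ^ p = ∫ β, ‖g β x‖ ^ p ∂ν)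
    (x : X) (hx : x ≠ 0) :
    1 / (⨆ (α : Ω) (β : Δ), (‖g β (τ α)‖₊ : ℝ≥0∞)) ≤
      ν {β : Δ | g β x ≠ 0} ^ (1 / p) * μ {α : Ω | f α x ≠ 0} ^ (1 / q) := by
  have hpq' : p.HolderConjugate q :=
    Real.holderConjugate_iff.mpr ⟨hp, by simpa only [one_div] using hpq⟩
  set M := ⨆ (α : Ω) (β : Δ), (‖g β (τ α)‖₊ : ℝ≥0∞)
  set A := {α : Ω | f α x ≠ 0}
  set B := {β : Δ | g β x ≠ 0}
  have hg_le : ∀ β, ‖g β x‖ₑ ≤ ‖x‖ₑ * (M * μ A ^ (1 / q)) := fun β => by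
    rw [hf_rec x (g β), ← eLpNorm'_eq_enorm_of_norm_rpow_eq_integral hx hpq'.pos (hf_norm x)]
    exact enorm_integral_mul_le_eLpNorm'_mul hpq' (hf_meas x).aestronglyMeasurable
      fun α => le_iSup₂ (f := fun α β => (‖g β (τ α)‖₊ : ℝ≥0∞)) α β
  have hx_le : ‖x‖ₑ * 1 ≤ ‖x‖ₑ * (M * μ A ^ (1 / q) * ν B ^ (1 / p)) :=
    calc ‖x‖ₑ * 1 = eLpNorm' (fun β => g β x) p ν := by
          rw [mul_one, eLpNorm'_eq_enorm_of_norm_rpow_eq_integral hx hpq'.pos (hg_norm x)]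
      _ ≤ ‖x‖ₑ * (M * μ A ^ (1 / q)) * ν B ^ (1 / p) :=
          eLpNorm'_le_mul_measure_support_rpow hpq'.pos hg_le
      _ = ‖x‖ₑ * (M * μ A ^ (1 / q) * ν B ^ (1 / p)) := mul_assoc _ _ _
  rw [ENNReal.mul_le_mul_iff_right (enorm_ne_zero.2 hx) enorm_ne_top] at hx_le
  exact div_le_of_le_mul (hx_le.trans_eq (by ring))

/-- **Functional Continuous Uncertainty Principle** (second inequality).
If `(f, τ)` and `(g, ω)` are continuous p-Schauder frames for a Banach space `X`,
then for every nonzero `x`,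
`ν(supp θ_g x)^(1/p) * μ(supp θ_f x)^(1/q) ≥ 1 / sup_{α,β} |g_β(τ_α)|`. -/
theorem functional_continuous_uncertainty_second
    {𝕂 : Type*} [RCLike 𝕂]
    {X : Type*} [NormedAddCommGroup X] [NormedSpace 𝕂 X] [CompleteSpace X]
    {Ω Δ : Type*} [MeasurableSpace Ω] [MeasurableSpace Δ]
    (μ : Measure Ω) (ν : Measure Δ)
    (p q : ℝ) (hp : 1 < p) (hpq : 1 / p + 1 / q = 1)
    (f : Ω → X →L[𝕂] 𝕂) (τ : Ω → X)
    (g : Δ → X →L[𝕂] 𝕂) (ω : Δ → X)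
    -- `(f, τ)` is a continuous p-Schauder frame for `X` :
    (hf_meas : ∀ x : X, StronglyMeasurable fun α : Ω => f α x)
    (hf_norm : ∀ x : X, ‖x‖ ^ p = ∫ α, ‖f α x‖ ^ p ∂μ)
    (hf_int : ∀ x : X, ∀ φ : X →L[𝕂] 𝕂, Integrable (fun α : Ω => f α x * φ (τ α)) μ)
    (hf_rec : ∀ x : X, ∀ φ : X →L[𝕂] 𝕂, φ x = ∫ α, f α x * φ (τ α) ∂μ)
    -- `(g, ω)` is a continuous p-Schauder frame for `X` :
    (hg_meas : ∀ x : X, StronglyMeasurable fun β : Δ => g β x)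
    (hg_norm : ∀ x : X, ‖x‖ ^ p = ∫ β, ‖g β x‖ ^ p ∂ν)
    (hg_int : ∀ x : X, ∀ φ : X →L[𝕂] 𝕂, Integrable (fun β : Δ => g β x * φ (ω β)) ν)
    (hg_rec : ∀ x : X, ∀ φ : X →L[𝕂] 𝕂, φ x = ∫ β, g β x * φ (ω β) ∂ν)
    (x : X) (hx : x ≠ 0) :
    1 / (⨆ (α : Ω) (β : Δ), (‖g β (τ α)‖₊ : ℝ≥0∞)) ≤
      ν {β : Δ | g β x ≠ 0} ^ (1 / p) * μ {α : Ω | f α x ≠ 0} ^ (1 / q) :=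
  functional_continuous_uncertainty_second_general μ ν p q hp hpq f τ g hf_meas hf_norm hf_rec
    hg_norm x hx
end

section
/- Let (Ω, μ) and (Δ, ν) be measure spaces and let {τ_α}_{α∈Ω} and {ω_β}_{β∈Δ} be Parseval continuous frames for a Hilbert space H over 𝕂 (ℝ or ℂ). Then for every h ∈ H with h ≠ 0, ν(supp(θ_ω h)) · μ(supp(θ_τ h)) ≥ 1 / sup_{α∈Ω, β∈Δ} |⟨τ_α, ω_β⟩|². -/
open MeasureTheory ENNReal

open scoped InnerProductSpace

/-!
A Parseval frame reconstructs inner products, `⟪h, x⟫ = ∫ ⟪h, τ α⟫ ⟪τ α, x⟫ dμ`, since its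
(conjugated) analysis operator is an isometry `H → L²(μ)`. Restricting this integral to
`supp θ_τ h` and applying Cauchy–Schwarz gives, with `M = sup |⟪τ α, ω β⟫|²`,
`|⟪h, ω β⟫|² ≤ ‖h‖² M μ(supp θ_τ h)` for every `β`. Integrating over `supp θ_ω h` and using the
Parseval identity for `ω` yields `‖h‖² ≤ ‖h‖² M μ(supp θ_τ h) ν(supp θ_ω h)`; cancel `‖h‖² ≠ 0`.
-/

theorem sq_lintegral_mul_le {α : Type*} [MeasurableSpace α] {μ : Measure α} {f g : α → ℝ≥0∞}
    (hf : AEMeasurable f μ) (hg : AEMeasurable g μ) :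
    (∫⁻ a, f a * g a ∂μ) ^ 2 ≤ (∫⁻ a, f a ^ 2 ∂μ) * ∫⁻ a, g a ^ 2 ∂μ := by
  have h := ENNReal.lintegral_mul_le_Lp_mul_Lq μ Real.HolderConjugate.two_two hf hg
  simp only [Pi.mul_apply, ENNReal.rpow_two] at h
  calc (∫⁻ a, f a * g a ∂μ) ^ 2
      ≤ ((∫⁻ a, f a ^ 2 ∂μ) ^ (1 / 2 : ℝ) * (∫⁻ a, g a ^ 2 ∂μ) ^ (1 / 2 : ℝ)) ^ 2 := by gcongr
    _ = (∫⁻ a, f a ^ 2 ∂μ) * ∫⁻ a, g a ^ 2 ∂μ := by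
      rw [mul_pow, ← ENNReal.rpow_natCast, ← ENNReal.rpow_natCast, ← ENNReal.rpow_mul,
        ← ENNReal.rpow_mul]
      norm_num

theorem lintegral_le_mul_measure_of_support_subset {α : Type*} [MeasurableSpace α]
    {μ : Measure α} {f : α → ℝ≥0∞} {C : ℝ≥0∞} {s : Set α} (hfC : ∀ a, f a ≤ C)
    (hfs : Function.support f ⊆ s) : ∫⁻ a, f a ∂μ ≤ C * μ s :=
  calc ∫⁻ a, f a ∂μ = ∫⁻ a in s, f a ∂μ := (setLIntegral_eq_of_support_subset hfs).symm
    _ ≤ ∫⁻ _ in s, C ∂μ := lintegral_mono hfC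
    _ = C * μ s := setLIntegral_const s C

section ParsevalFrame

variable {𝕂 H Ω : Type*} [RCLike 𝕂] [NormedAddCommGroup H] [InnerProductSpace 𝕂 H]
  [MeasurableSpace Ω] {μ : Measure Ω} {τ : Ω → H}

theorem integrable_norm_inner_sq_of_parseval
    (hτ_norm : ∀ h : H, ‖h‖ ^ 2 = ∫ α, ‖⟪h, τ α⟫_𝕂‖ ^ 2 ∂μ) (x : H) :
    Integrable (fun α => ‖⟪x, τ α⟫_𝕂‖ ^ 2) μ := by
  by_contra hx
  -- a non-integrable integrand has Bochner integral `0`, which forces `x = 0`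
  have hx0 : x = 0 := by simpa [integral_undef hx] using hτ_norm x
  simp [hx0] at hx

theorem lintegral_enorm_inner_sq_of_parseval
    (hτ_norm : ∀ h : H, ‖h‖ ^ 2 = ∫ α, ‖⟪h, τ α⟫_𝕂‖ ^ 2 ∂μ) (x : H) :
    ∫⁻ α, ‖⟪x, τ α⟫_𝕂‖ₑ ^ 2 ∂μ = ‖x‖ₑ ^ 2 := by
  have h := ofReal_integral_eq_lintegral_ofReal (integrable_norm_inner_sq_of_parseval hτ_norm x)
    (Filter.Eventually.of_forall fun α => sq_nonneg _)
  simp only [← hτ_norm x, ENNReal.ofReal_pow (norm_nonneg _), ofReal_norm] at h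
  exact h.symm

theorem eLpNorm_inner_of_parseval
    (hτ_norm : ∀ h : H, ‖h‖ ^ 2 = ∫ α, ‖⟪h, τ α⟫_𝕂‖ ^ 2 ∂μ) (x : H) :
    eLpNorm (fun α => ⟪τ α, x⟫_𝕂) 2 μ = ‖x‖ₑ := by
  rw [eLpNorm_eq_lintegral_rpow_enorm_toReal two_ne_zero ofNat_ne_top, toReal_ofNat]
  have hsymm (α : Ω) : ‖⟪τ α, x⟫_𝕂‖ₑ = ‖⟪x, τ α⟫_𝕂‖ₑ := by
    rw [← inner_conj_symm, RCLike.enorm_conj]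
  simp only [ENNReal.rpow_two, hsymm, lintegral_enorm_inner_sq_of_parseval hτ_norm x]
  rw [← ENNReal.rpow_two, ← ENNReal.rpow_mul]
  norm_num

theorem memLp_inner_of_parseval
    (hτ_meas : ∀ h : H, StronglyMeasurable fun α : Ω => ⟪h, τ α⟫_𝕂)
    (hτ_norm : ∀ h : H, ‖h‖ ^ 2 = ∫ α, ‖⟪h, τ α⟫_𝕂‖ ^ 2 ∂μ) (x : H) :
    MemLp (fun α => ⟪τ α, x⟫_𝕂) 2 μ := by
  refine ⟨?_, by simp [eLpNorm_inner_of_parseval hτ_norm x]⟩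
  have h : (fun α => ⟪τ α, x⟫_𝕂) = star fun α => ⟪x, τ α⟫_𝕂 :=
    funext fun α => (inner_conj_symm (τ α) x).symm
  exact h ▸ (hτ_meas x).star.aestronglyMeasurable

/-- The conjugate of the paper's analysis operator `θ_τ h = ⟪h, τ ·⟫`, which is conjugate-linear
in `h`. -/
noncomputable def parsevalAnalysis
    (hτ_meas : ∀ h : H, StronglyMeasurable fun α : Ω => ⟪h, τ α⟫_𝕂)
    (hτ_norm : ∀ h : H, ‖h‖ ^ 2 = ∫ α, ‖⟪h, τ α⟫_𝕂‖ ^ 2 ∂μ) : H →ₗᵢ[𝕂] Lp 𝕂 2 μ where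
  toFun x := (memLp_inner_of_parseval hτ_meas hτ_norm x).toLp
  map_add' x y := by
    rw [← MemLp.toLp_add, MemLp.toLp_eq_toLp_iff]
    exact .of_forall fun α => inner_add_right _ _ _
  map_smul' c x := by
    rw [RingHom.id_apply, ← MemLp.toLp_const_smul, MemLp.toLp_eq_toLp_iff]
    exact .of_forall fun α => inner_smul_right _ _ _
  norm_map' x := by
    refine (Lp.norm_toLp _ (memLp_inner_of_parseval hτ_meas hτ_norm x)).trans ?_
    rw [eLpNorm_inner_of_parseval hτ_norm, toReal_enorm]

theorem coeFn_parsevalAnalysis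
    (hτ_meas : ∀ h : H, StronglyMeasurable fun α : Ω => ⟪h, τ α⟫_𝕂)
    (hτ_norm : ∀ h : H, ‖h‖ ^ 2 = ∫ α, ‖⟪h, τ α⟫_𝕂‖ ^ 2 ∂μ) (x : H) :
    parsevalAnalysis hτ_meas hτ_norm x =ᵐ[μ] fun α => ⟪τ α, x⟫_𝕂 :=
  (memLp_inner_of_parseval hτ_meas hτ_norm x).coeFn_toLp

theorem inner_eq_integral_of_parseval
    (hτ_meas : ∀ h : H, StronglyMeasurable fun α : Ω => ⟪h, τ α⟫_𝕂)
    (hτ_norm : ∀ h : H, ‖h‖ ^ 2 = ∫ α, ‖⟪h, τ α⟫_𝕂‖ ^ 2 ∂μ) (x y : H) :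
    ⟪x, y⟫_𝕂 = ∫ α, ⟪x, τ α⟫_𝕂 * ⟪τ α, y⟫_𝕂 ∂μ := by
  rw [← (parsevalAnalysis hτ_meas hτ_norm).inner_map_map, L2.inner_def]
  refine integral_congr_ae ?_
  filter_upwards [coeFn_parsevalAnalysis hτ_meas hτ_norm x,
    coeFn_parsevalAnalysis hτ_meas hτ_norm y] with α hx hy
  rw [hx, hy, RCLike.inner_apply, inner_conj_symm, mul_comm]


theorem enorm_inner_sq_le_of_parseval
    (hτ_meas : ∀ h : H, StronglyMeasurable fun α : Ω => ⟪h, τ α⟫_𝕂)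
    (hτ_norm : ∀ h : H, ‖h‖ ^ 2 = ∫ α, ‖⟪h, τ α⟫_𝕂‖ ^ 2 ∂μ) (h x : H) :
    ‖⟪h, x⟫_𝕂‖ₑ ^ 2 ≤
      ‖h‖ₑ ^ 2 * ((⨆ α, ‖⟪τ α, x⟫_𝕂‖ₑ ^ 2) * μ {α | ⟪h, τ α⟫_𝕂 ≠ 0}) := by
  set S := {α | ⟪h, τ α⟫_𝕂 ≠ 0}
  have hsupp : Function.support (fun α => ‖⟪h, τ α⟫_𝕂‖ₑ * ‖⟪τ α, x⟫_𝕂‖ₑ) ⊆ S := by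
    intro α hα hα0
    simp [show ⟪h, τ α⟫_𝕂 = 0 by simpa [S] using hα0] at hα
  have hbound : ‖⟪h, x⟫_𝕂‖ₑ ≤ ∫⁻ α in S, ‖⟪h, τ α⟫_𝕂‖ₑ * ‖⟪τ α, x⟫_𝕂‖ₑ ∂μ := by
    rw [inner_eq_integral_of_parseval hτ_meas hτ_norm h x, setLIntegral_eq_of_support_subset hsupp]
    simpa only [enorm_mul] using enorm_integral_le_lintegral_enorm (fun α => ⟪h, τ α⟫_𝕂 * ⟪τ α, x⟫_𝕂)
  calc ‖⟪h, x⟫_𝕂‖ₑ ^ 2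
      ≤ (∫⁻ α in S, ‖⟪h, τ α⟫_𝕂‖ₑ ^ 2 ∂μ) * ∫⁻ α in S, ‖⟪τ α, x⟫_𝕂‖ₑ ^ 2 ∂μ :=
        (pow_le_pow_left' hbound 2).trans <| sq_lintegral_mul_le
          (hτ_meas h).aestronglyMeasurable.enorm
          (memLp_inner_of_parseval hτ_meas hτ_norm x).1.restrict.enorm
    _ ≤ ‖h‖ₑ ^ 2 * ((⨆ α, ‖⟪τ α, x⟫_𝕂‖ₑ ^ 2) * μ S) := by
      gcongr
      · exact (setLIntegral_le_lintegral _ _).trans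
          (lintegral_enorm_inner_sq_of_parseval hτ_norm h).le
      · exact (lintegral_mono fun α => le_iSup (fun α => ‖⟪τ α, x⟫_𝕂‖ₑ ^ 2) α).trans
          (setLIntegral_const S _).le

end ParsevalFrame

theorem parseval_continuous_frame_uncertainty_second_general
    {𝕂 : Type*} [RCLike 𝕂]
    {H : Type*} [NormedAddCommGroup H] [InnerProductSpace 𝕂 H]
    {Ω Δ : Type*} [MeasurableSpace Ω] [MeasurableSpace Δ]
    (μ : Measure Ω) (ν : Measure Δ)
    (τ : Ω → H) (ω : Δ → H)
    -- `τ` is a Parseval continuous frame for `H` :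
    (hτ_meas : ∀ h : H, StronglyMeasurable fun α : Ω => (inner 𝕂 h (τ α) : 𝕂))
    (hτ_norm : ∀ h : H, ‖h‖ ^ 2 = ∫ α, ‖(inner 𝕂 h (τ α) : 𝕂)‖ ^ 2 ∂μ)
    -- `ω` is a Parseval continuous frame for `H` :
    (hω_norm : ∀ h : H, ‖h‖ ^ 2 = ∫ β, ‖(inner 𝕂 h (ω β) : 𝕂)‖ ^ 2 ∂ν)
    (h : H) (hh : h ≠ 0) :
    1 / (⨆ (α : Ω) (β : Δ), (‖(inner 𝕂 (τ α) (ω β) : 𝕂)‖₊ : ℝ≥0∞) ^ 2) ≤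
      ν {β : Δ | (inner 𝕂 h (ω β) : 𝕂) ≠ 0} * μ {α : Ω | (inner 𝕂 h (τ α) : 𝕂) ≠ 0} := by
  set M := ⨆ (α : Ω) (β : Δ), (‖(inner 𝕂 (τ α) (ω β) : 𝕂)‖₊ : ℝ≥0∞) ^ 2
  set Sτ := {α : Ω | (inner 𝕂 h (τ α) : 𝕂) ≠ 0}
  set Sω := {β : Δ | (inner 𝕂 h (ω β) : 𝕂) ≠ 0}
  have hpointwise (β : Δ) : ‖⟪h, ω β⟫_𝕂‖ₑ ^ 2 ≤ ‖h‖ₑ ^ 2 * (M * μ Sτ) := by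
    refine (enorm_inner_sq_le_of_parseval hτ_meas hτ_norm h (ω β)).trans ?_
    gcongr
    exact iSup_le fun α => le_iSup₂ (f := fun α β => (‖⟪τ α, ω β⟫_𝕂‖₊ : ℝ≥0∞) ^ 2) α β
  have hsupp : Function.support (fun β => ‖⟪h, ω β⟫_𝕂‖ₑ ^ 2) ⊆ Sω := by
    intro β hβ hβ0
    simp [show ⟪h, ω β⟫_𝕂 = 0 by simpa [Sω] using hβ0] at hβ
  have hnorm : ‖h‖ₑ ^ 2 * 1 ≤ ‖h‖ₑ ^ 2 * (M * μ Sτ * ν Sω) :=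
    calc ‖h‖ₑ ^ 2 * 1 = ∫⁻ β, ‖⟪h, ω β⟫_𝕂‖ₑ ^ 2 ∂ν := by
          rw [mul_one, lintegral_enorm_inner_sq_of_parseval hω_norm h]
      _ ≤ ‖h‖ₑ ^ 2 * (M * μ Sτ) * ν Sω :=
          lintegral_le_mul_measure_of_support_subset hpointwise hsupp
      _ = ‖h‖ₑ ^ 2 * (M * μ Sτ * ν Sω) := by ring
  have hone := (ENNReal.mul_le_mul_iff_right (by simpa using hh) (by simp)).mp hnorm
  exact ENNReal.div_le_of_le_mul (hone.trans_eq (by ring))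

/-- Continuous uncertainty principle for Parseval continuous frames in a Hilbert space:
`ν(supp θ_ω h) * μ(supp θ_τ h) ≥ 1 / sup_{α,β} |⟪τ_α, ω_β⟫|²` for every nonzero `h`. -/
theorem parseval_continuous_frame_uncertainty_second
    {𝕂 : Type*} [RCLike 𝕂]
    {H : Type*} [NormedAddCommGroup H] [InnerProductSpace 𝕂 H] [CompleteSpace H]
    {Ω Δ : Type*} [MeasurableSpace Ω] [MeasurableSpace Δ]
    (μ : Measure Ω) (ν : Measure Δ)
    (τ : Ω → H) (ω : Δ → H)
    -- `τ` is a Parseval continuous frame for `H` :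
    (hτ_meas : ∀ h : H, StronglyMeasurable fun α : Ω => (inner 𝕂 h (τ α) : 𝕂))
    (hτ_norm : ∀ h : H, ‖h‖ ^ 2 = ∫ α, ‖(inner 𝕂 h (τ α) : 𝕂)‖ ^ 2 ∂μ)
    -- `ω` is a Parseval continuous frame for `H` :
    (hω_meas : ∀ h : H, StronglyMeasurable fun β : Δ => (inner 𝕂 h (ω β) : 𝕂))
    (hω_norm : ∀ h : H, ‖h‖ ^ 2 = ∫ β, ‖(inner 𝕂 h (ω β) : 𝕂)‖ ^ 2 ∂ν)
    (h : H) (hh : h ≠ 0) :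
    1 / (⨆ (α : Ω) (β : Δ), (‖(inner 𝕂 (τ α) (ω β) : 𝕂)‖₊ : ℝ≥0∞) ^ 2) ≤
      ν {β : Δ | (inner 𝕂 h (ω β) : 𝕂) ≠ 0} * μ {α : Ω | (inner 𝕂 h (τ α) : 𝕂) ≠ 0} :=
  parseval_continuous_frame_uncertainty_second_general μ ν τ ω hτ_meas hτ_norm hω_norm h hh
end

section
/- (Donoho–Stark Uncertainty Principle, additive form) For every d ∈ ℕ with d ≥ 1 and every h ∈ ℂ^d with h ≠ 0, we have ((‖h‖₀ + ‖ĥ‖₀)/2)² ≥ ‖h‖₀ · ‖ĥ‖₀ ≥ d; in particular ‖h‖₀ + ‖ĥ‖₀ ≥ 2√d, where ĥ is the discrete Fourier transform of h. -/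
/-! Every Fourier coefficient is at most `‖h‖_∞` times the size of the support of `h`, and by
Fourier inversion `𝓕 (𝓕 h) = d • h (-·)` the same estimate bounds `d ‖h‖_∞` by `‖ĥ‖_∞` times the
size of the support of `ĥ`. Chaining the two and cancelling `‖h‖_∞ > 0` gives
`d ≤ ‖h‖₀ ‖ĥ‖₀`; the rest is AM–GM. -/

open Finset ZMod

lemma sum_norm_le_card_ne_zero_mul {ι E : Type*} [Fintype ι] [SeminormedAddCommGroup E]
    (f : ι → E) {M : ℝ} (hM : ∀ i, ‖f i‖ ≤ M) :
    ∑ i, ‖f i‖ ≤ Nat.card {i // f i ≠ 0} * M := by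
  classical
  calc ∑ i, ‖f i‖ = ∑ i with f i ≠ 0, ‖f i‖ :=
        (sum_filter_of_ne fun _ _ ↦ ne_zero_of_norm_ne_zero).symm
    _ ≤ #{i | f i ≠ 0} • M := sum_le_card_nsmul _ _ _ fun i _ ↦ hM i
    _ = Nat.card {i // f i ≠ 0} * M := by
      rw [nsmul_eq_mul, Nat.card_eq_fintype_card, Fintype.card_subtype]

namespace ZMod

variable {N : ℕ} [NeZero N] {E : Type*} [NormedAddCommGroup E] [NormedSpace ℂ E]

lemma norm_dft_le_sum_norm (Φ : ZMod N → E) (k : ZMod N) : ‖𝓕 Φ k‖ ≤ ∑ j, ‖Φ j‖ := by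
  rw [dft_apply]
  refine (norm_sum_le _ _).trans_eq (sum_congr rfl fun j _ ↦ ?_)
  rw [norm_smul, AddChar.norm_apply, one_mul]

lemma norm_dft_le_card_ne_zero_mul (Φ : ZMod N → E) {M : ℝ} (hM : ∀ j, ‖Φ j‖ ≤ M)
    (k : ZMod N) : ‖𝓕 Φ k‖ ≤ Nat.card {j // Φ j ≠ 0} * M :=
  (norm_dft_le_sum_norm Φ k).trans (sum_norm_le_card_ne_zero_mul Φ hM)

theorem le_card_ne_zero_mul_card_dft_ne_zero {Φ : ZMod N → E} (hΦ : Φ ≠ 0) :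
    (N : ℝ) ≤ Nat.card {j // Φ j ≠ 0} * Nat.card {k // 𝓕 Φ k ≠ 0} := by
  obtain ⟨j₀, -, hj₀⟩ := exists_max_image univ (fun j ↦ ‖Φ j‖) univ_nonempty
  obtain ⟨k₀, -, hk₀⟩ := exists_max_image univ (fun k ↦ ‖𝓕 Φ k‖) univ_nonempty
  have hΦj₀ : 0 < ‖Φ j₀‖ := by
    obtain ⟨j, hj⟩ := Function.ne_iff.mp hΦ
    exact (norm_pos_iff.mpr hj).trans_le (hj₀ j (mem_univ j))
  refine le_of_mul_le_mul_right ?_ hΦj₀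
  calc (N : ℝ) * ‖Φ j₀‖ = ‖𝓕 (𝓕 Φ) (-j₀)‖ := by simp [dft_dft, norm_smul]
    _ ≤ Nat.card {k // 𝓕 Φ k ≠ 0} * ‖𝓕 Φ k₀‖ :=
      norm_dft_le_card_ne_zero_mul _ (fun k ↦ hk₀ k (mem_univ k)) _
    _ ≤ Nat.card {k // 𝓕 Φ k ≠ 0} * (Nat.card {j // Φ j ≠ 0} * ‖Φ j₀‖) := by
      gcongr
      exact norm_dft_le_card_ne_zero_mul _ (fun j ↦ hj₀ j (mem_univ j)) _
    _ = Nat.card {j // Φ j ≠ 0} * Nat.card {k // 𝓕 Φ k ≠ 0} * ‖Φ j₀‖ := by ring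

end ZMod

lemma two_mul_sqrt_le_add_of_le_mul {a b c : ℝ} (ha : 0 ≤ a) (hb : 0 ≤ b) (hc : c ≤ a * b) :
    2 * √c ≤ a + b := by
  rw [← le_div_iff₀' two_pos, Real.sqrt_le_iff]
  exact ⟨by positivity, hc.trans (by nlinarith [four_mul_le_sq_add a b])⟩

theorem donoho_stark_uncertainty_additive_general
    (d : ℕ) [NeZero d] (h : ZMod d → ℂ) (hh : h ≠ 0) :
    ((((Nat.card {j : ZMod d // h j ≠ 0} : ℝ) +
        (Nat.card {k : ZMod d // ZMod.dft h k ≠ 0} : ℝ)) / 2) ^ 2 ≥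
      (Nat.card {j : ZMod d // h j ≠ 0} : ℝ) *
        (Nat.card {k : ZMod d // ZMod.dft h k ≠ 0} : ℝ)) ∧
    ((Nat.card {j : ZMod d // h j ≠ 0} : ℝ) *
        (Nat.card {k : ZMod d // ZMod.dft h k ≠ 0} : ℝ) ≥ d) ∧
    ((Nat.card {j : ZMod d // h j ≠ 0} : ℝ) +
        (Nat.card {k : ZMod d // ZMod.dft h k ≠ 0} : ℝ) ≥ 2 * Real.sqrt d) := by
  have hprod := le_card_ne_zero_mul_card_dft_ne_zero hh
  refine ⟨?_, hprod, two_mul_sqrt_le_add_of_le_mul (by positivity) (by positivity) hprod⟩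
  nlinarith [four_mul_le_sq_add (Nat.card {j : ZMod d // h j ≠ 0} : ℝ)
    (Nat.card {k : ZMod d // ZMod.dft h k ≠ 0})]

/-- **Donoho-Stark Uncertainty Principle, additive form**: for every `d ≥ 1` and every
nonzero `h : ZMod d → ℂ`, `((‖h‖₀ + ‖ĥ‖₀)/2)² ≥ ‖h‖₀ * ‖ĥ‖₀ ≥ d`; in particular
`‖h‖₀ + ‖ĥ‖₀ ≥ 2√d`, where `ĥ` is the discrete Fourier transform of `h`. -/
theorem donoho_stark_uncertainty_additive
    (d : ℕ) [NeZero d] (hd : 1 ≤ d) (h : ZMod d → ℂ) (hh : h ≠ 0) :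
    ((((Nat.card {j : ZMod d // h j ≠ 0} : ℝ) +
        (Nat.card {k : ZMod d // ZMod.dft h k ≠ 0} : ℝ)) / 2) ^ 2 ≥
      (Nat.card {j : ZMod d // h j ≠ 0} : ℝ) *
        (Nat.card {k : ZMod d // ZMod.dft h k ≠ 0} : ℝ)) ∧
    ((Nat.card {j : ZMod d // h j ≠ 0} : ℝ) *
        (Nat.card {k : ZMod d // ZMod.dft h k ≠ 0} : ℝ) ≥ d) ∧
    ((Nat.card {j : ZMod d // h j ≠ 0} : ℝ) +
        (Nat.card {k : ZMod d // ZMod.dft h k ≠ 0} : ℝ) ≥ 2 * Real.sqrt d) :=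
  donoho_stark_uncertainty_additive_general d h hh
end

section
/- (Ricaud–Torrésani Uncertainty Principle) Let {τ_j}_{j=1}^n and {ω_j}_{j=1}^n be two Parseval frames for a finite-dimensional Hilbert space H over 𝕂 (ℝ or ℂ). Then for every h ∈ H with h ≠ 0, ‖θ_τ h‖₀ · ‖θ_ω h‖₀ ≥ 1 / max_{1≤j,k≤n} |⟨τ_j, ω_k⟩|². -/
/-!
The analysis map of a Parseval frame `ω` is an isometry, hence preserves inner products:
`⟪x, y⟫ = ∑ₖ ⟪x, ωₖ⟫ ⟪ωₖ, y⟫`. Taking `x = h`, `y = τⱼ` and applying Cauchy–Schwarz on the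
support of `θ_ω h` gives `|⟪h, τⱼ⟫|² ≤ ‖θ_ω h‖₀ · M · ‖h‖²` with `M = maxⱼₖ |⟪τⱼ, ωₖ⟫|²`;
summing over the support of `θ_τ h` yields `‖h‖² ≤ ‖θ_τ h‖₀ · ‖θ_ω h‖₀ · M · ‖h‖²`.
-/

open Finset

section

variable {𝕂 H ι : Type*} [RCLike 𝕂] [NormedAddCommGroup H] [InnerProductSpace 𝕂 H] [Fintype ι]

variable (𝕂) in
def IsParsevalFrame (ω : ι → H) : Prop :=
  ∀ h : H, ‖h‖ ^ 2 = ∑ j, ‖(inner 𝕂 h (ω j) : 𝕂)‖ ^ 2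

variable (𝕂) in
/-- Mathlib's inner product is conjugate-linear in its first argument, so the linear analysis
map has coordinates `⟪ω k, x⟫`, the conjugates of the paper's `⟨x, ω_k⟩`. -/
def frameAnalysis (ω : ι → H) : H →ₗ[𝕂] EuclideanSpace 𝕂 ι where
  toFun x := WithLp.toLp 2 fun k => inner 𝕂 (ω k) x
  map_add' x y := by ext k; simp [inner_add_right]
  map_smul' c x := by ext k; simp [inner_smul_right]

open Classical in
variable (𝕂) in
noncomputable def frameSupport (ω : ι → H) (x : H) : Finset ι :=
  {k | (inner 𝕂 x (ω k) : 𝕂) ≠ 0}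

theorem card_frameSupport (ω : ι → H) (x : H) :
    #(frameSupport 𝕂 ω x) = Nat.card {k // (inner 𝕂 x (ω k) : 𝕂) ≠ 0} := by
  rw [Nat.card_eq_fintype_card, Fintype.card_subtype, frameSupport]

namespace IsParsevalFrame

variable {ω : ι → H}

theorem norm_frameAnalysis (hω : IsParsevalFrame 𝕂 ω) (x : H) :
    ‖frameAnalysis 𝕂 ω x‖ = ‖x‖ := by
  rw [EuclideanSpace.norm_eq, ← Real.sqrt_sq (norm_nonneg x), hω x]
  simp [frameAnalysis, norm_inner_symm]

theorem inner_eq_sum_inner_mul_inner (hω : IsParsevalFrame 𝕂 ω) (x y : H) :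
    inner 𝕂 x y = ∑ k, inner 𝕂 x (ω k) * inner 𝕂 (ω k) y := by
  let θ : H →ₗᵢ[𝕂] EuclideanSpace 𝕂 ι := ⟨frameAnalysis 𝕂 ω, hω.norm_frameAnalysis⟩
  rw [← θ.inner_map_map, PiLp.inner_apply]
  simp [θ, frameAnalysis, RCLike.inner_apply, inner_conj_symm, mul_comm]

theorem sum_norm_sq_inner_le (hω : IsParsevalFrame 𝕂 ω) (s : Finset ι) (x : H) :
    ∑ k ∈ s, ‖(inner 𝕂 x (ω k) : 𝕂)‖ ^ 2 ≤ ‖x‖ ^ 2 :=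
  hω x ▸ sum_le_univ_sum_of_nonneg fun _ => sq_nonneg _

theorem inner_eq_sum_frameSupport (hω : IsParsevalFrame 𝕂 ω) (x y : H) :
    inner 𝕂 x y = ∑ k ∈ frameSupport 𝕂 ω x, inner 𝕂 x (ω k) * inner 𝕂 (ω k) y := by
  rw [hω.inner_eq_sum_inner_mul_inner, frameSupport, sum_filter_of_ne]
  exact fun k _ hk => left_ne_zero_of_mul hk

theorem norm_inner_sq_le (hω : IsParsevalFrame 𝕂 ω) (x y : H) :
    ‖(inner 𝕂 x y : 𝕂)‖ ^ 2 ≤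
      (∑ k ∈ frameSupport 𝕂 ω x, ‖(inner 𝕂 (ω k) y : 𝕂)‖ ^ 2) * ‖x‖ ^ 2 := by
  set W := frameSupport 𝕂 ω x
  calc ‖(inner 𝕂 x y : 𝕂)‖ ^ 2
      ≤ (∑ k ∈ W, ‖(inner 𝕂 (ω k) y : 𝕂)‖ * ‖(inner 𝕂 x (ω k) : 𝕂)‖) ^ 2 := by
        rw [hω.inner_eq_sum_frameSupport]
        gcongr
        exact (norm_sum_le _ _).trans_eq (by simp [W, mul_comm])
    _ ≤ (∑ k ∈ W, ‖(inner 𝕂 (ω k) y : 𝕂)‖ ^ 2) * ∑ k ∈ W, ‖(inner 𝕂 x (ω k) : 𝕂)‖ ^ 2 :=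
        sum_mul_sq_le_sq_mul_sq _ _ _
    _ ≤ (∑ k ∈ W, ‖(inner 𝕂 (ω k) y : 𝕂)‖ ^ 2) * ‖x‖ ^ 2 := by
        gcongr
        exact hω.sum_norm_sq_inner_le W x

theorem norm_inner_sq_le_card_mul (hω : IsParsevalFrame 𝕂 ω) {M : ℝ} {y : H}
    (hM : ∀ k, ‖(inner 𝕂 y (ω k) : 𝕂)‖ ^ 2 ≤ M) (x : H) :
    ‖(inner 𝕂 x y : 𝕂)‖ ^ 2 ≤ #(frameSupport 𝕂 ω x) * M * ‖x‖ ^ 2 := by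
  refine (hω.norm_inner_sq_le x y).trans ?_
  gcongr
  calc ∑ k ∈ frameSupport 𝕂 ω x, ‖(inner 𝕂 (ω k) y : 𝕂)‖ ^ 2
      ≤ ∑ _k ∈ frameSupport 𝕂 ω x, M :=
        sum_le_sum fun k _ => norm_inner_symm (𝕜 := 𝕂) (ω k) y ▸ hM k
    _ = #(frameSupport 𝕂 ω x) * M := by simp

theorem one_le_card_mul_card_mul {κ : Type*} [Fintype κ] {τ : κ → H} (hτ : IsParsevalFrame 𝕂 τ)
    (hω : IsParsevalFrame 𝕂 ω) {M : ℝ} (hM : ∀ j k, ‖(inner 𝕂 (τ j) (ω k) : 𝕂)‖ ^ 2 ≤ M)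
    {h : H} (hh : h ≠ 0) :
    1 ≤ #(frameSupport 𝕂 τ h) * #(frameSupport 𝕂 ω h) * M := by
  have hbound : ‖h‖ ^ 2 ≤ #(frameSupport 𝕂 τ h) * (#(frameSupport 𝕂 ω h) * M * ‖h‖ ^ 2) :=
    calc ‖h‖ ^ 2 = ∑ j ∈ frameSupport 𝕂 τ h, ‖(inner 𝕂 h (τ j) : 𝕂)‖ ^ 2 := by
          rw [hτ h, frameSupport, sum_filter_of_ne]
          exact fun j _ hj => by simpa using hj
      _ ≤ ∑ _j ∈ frameSupport 𝕂 τ h, #(frameSupport 𝕂 ω h) * M * ‖h‖ ^ 2 :=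
          sum_le_sum fun j _ => hω.norm_inner_sq_le_card_mul (fun k => hM j k) h
      _ = _ := by simp
  have hpos : 0 < ‖h‖ ^ 2 := by positivity
  nlinarith

end IsParsevalFrame

end

theorem ricaud_torresani_uncertainty_general
    {𝕂 : Type*} [RCLike 𝕂]
    {H : Type*} [NormedAddCommGroup H] [InnerProductSpace 𝕂 H]
    {n : ℕ} (τ ω : Fin n → H)
    -- `τ` and `ω` are Parseval frames for `H` :
    (hτ : ∀ h : H, ‖h‖ ^ 2 = ∑ j, ‖(inner 𝕂 h (τ j) : 𝕂)‖ ^ 2)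
    (hω : ∀ h : H, ‖h‖ ^ 2 = ∑ k, ‖(inner 𝕂 h (ω k) : 𝕂)‖ ^ 2)
    (h : H) (hh : h ≠ 0) :
    1 / (⨆ (j : Fin n) (k : Fin n), ‖(inner 𝕂 (τ j) (ω k) : 𝕂)‖ ^ 2) ≤
      (Nat.card {j : Fin n // (inner 𝕂 h (τ j) : 𝕂) ≠ 0} : ℝ) *
        (Nat.card {k : Fin n // (inner 𝕂 h (ω k) : 𝕂) ≠ 0} : ℝ) := by
  set M := ⨆ (j : Fin n) (k : Fin n), ‖(inner 𝕂 (τ j) (ω k) : 𝕂)‖ ^ 2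
  have hM j k : ‖(inner 𝕂 (τ j) (ω k) : 𝕂)‖ ^ 2 ≤ M :=
    (Finite.le_ciSup (fun k => ‖(inner 𝕂 (τ j) (ω k) : 𝕂)‖ ^ 2) k).trans
      (Finite.le_ciSup (fun j => ⨆ k, ‖(inner 𝕂 (τ j) (ω k) : 𝕂)‖ ^ 2) j)
  rw [← card_frameSupport, ← card_frameSupport]
  rcases le_or_gt M 0 with hM0 | hM0
  · exact (one_div_nonpos.mpr hM0).trans (by positivity)
  · rw [div_le_iff₀ hM0]
    exact IsParsevalFrame.one_le_card_mul_card_mul hτ hω hM hh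

/-- **Ricaud-Torrésani Uncertainty Principle**: if `τ` and `ω` are two Parseval frames
for a finite-dimensional Hilbert space `H`, then for every nonzero `h`,
`‖θ_τ h‖₀ * ‖θ_ω h‖₀ ≥ 1 / max_{j,k} |⟪τ_j, ω_k⟫|²`. -/
theorem ricaud_torresani_uncertainty
    {𝕂 : Type*} [RCLike 𝕂]
    {H : Type*} [NormedAddCommGroup H] [InnerProductSpace 𝕂 H] [FiniteDimensional 𝕂 H]
    {n : ℕ} (τ ω : Fin n → H)
    -- `τ` and `ω` are Parseval frames for `H` :
    (hτ : ∀ h : H, ‖h‖ ^ 2 = ∑ j, ‖(inner 𝕂 h (τ j) : 𝕂)‖ ^ 2)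
    (hω : ∀ h : H, ‖h‖ ^ 2 = ∑ k, ‖(inner 𝕂 h (ω k) : 𝕂)‖ ^ 2)
    (h : H) (hh : h ≠ 0) :
    1 / (⨆ (j : Fin n) (k : Fin n), ‖(inner 𝕂 (τ j) (ω k) : 𝕂)‖ ^ 2) ≤
      (Nat.card {j : Fin n // (inner 𝕂 h (τ j) : 𝕂) ≠ 0} : ℝ) *
        (Nat.card {k : Fin n // (inner 𝕂 h (ω k) : 𝕂) ≠ 0} : ℝ) :=
  ricaud_torresani_uncertainty_general τ ω hτ hω h hh
end
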